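/- For the dihedral group I_2(N) with constant multiplicity m, if q = A z^d + B z̄^d + z z̄ · p is an m-quasiinvariant homogeneous of degree d = mN + lN with 1 ≤ l ≤ m, then A = B. -/

import Mathlib

/-!
On the unit circle `z^a z̄^b = e^{i(a-b)φ}`, so a homogeneous `q` of degree `d = MN` (`M = m + l`)
is a trigonometric polynomial whose frequencies `a - b = d - 2b` are all `≡ d (mod 2)`.
Twisting the vanishing odd derivatives `∂_φ^{2s-1} q (πk/N) = 0` by `e^{-idπk/N}` and averaging
over the `N` mirrors keeps exactly the monomials with `N ∣ b`, whose frequencies are `(M - 2u)N`,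
`0 ≤ u ≤ M`; their coefficients `c` satisfy `∑ c w^{2s-1} = 0` for `s = 1, …, m`. Pairing these odd
moments with `w ↦ w p(w²)`, where `p` has degree `⌊(M-1)/2⌋ < m` and `w p(w²)` vanishes at all
these frequencies except `±d`, leaves `(A - B) d p(d²) = 0`.
-/

open Complex Finset
open scoped Real ComplexConjugate

section ExponentialSums

variable {ι : Type*}

theorem iteratedDeriv_sum_mul_cexp (S : Finset ι) (c ζ : ι → ℂ) (n : ℕ) :
    iteratedDeriv n (fun φ : ℝ => ∑ x ∈ S, c x * cexp (ζ x * φ))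
      = fun φ : ℝ => ∑ x ∈ S, c x * ζ x ^ n * cexp (ζ x * φ) := by
  induction n with
  | zero => simp
  | succ n ih =>
    rw [iteratedDeriv_succ, ih]
    funext φ
    refine (HasDerivAt.fun_sum fun x _ => ?_).deriv
    have h := (((hasDerivAt_id (φ : ℂ)).const_mul (ζ x)).cexp.comp_ofReal).const_mul
      (c x * ζ x ^ n)
    simp only [id, mul_one] at h
    exact h.congr_deriv (by ring)

theorem sum_range_cexp_two_mul_pi_div {N : ℕ} (hN : N ≠ 0) (j : ℤ) :
    ∑ k ∈ range N, cexp (↑(2 * j) * I * ↑(π * k / N)) = if (N : ℤ) ∣ j then (N : ℂ) else 0 := by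
  have hζ := isPrimitiveRoot_exp N hN
  set ζ := cexp (2 * π * I / N)
  have hterm : ∀ k : ℕ, cexp (↑(2 * j) * I * ↑(π * k / N)) = (ζ ^ j) ^ k := by
    intro k
    rw [← exp_int_mul, ← exp_nat_mul]
    congr 1
    push_cast
    field_simp
  simp_rw [hterm]
  split_ifs with hdvd
  · simp [(hζ.zpow_eq_one_iff_dvd j).mpr hdvd]
  · have hne : ζ ^ j ≠ 1 := mt (hζ.zpow_eq_one_iff_dvd j).mp hdvd
    rw [geom_sum_eq hne, ← zpow_natCast, ← zpow_mul, mul_comm, zpow_mul, zpow_natCast,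
      hζ.pow_eq_one, one_zpow, sub_self, zero_div]

theorem sum_filter_dvd_eq_zero_of_sum_cexp_eq_zero {N : ℕ} (hN : N ≠ 0) (S : Finset ι)
    (a : ι → ℂ) (n : ι → ℕ) (d : ℤ)
    (h : ∀ k < N, ∑ x ∈ S, a x * cexp (↑(d - 2 * n x) * I * ↑(π * k / N)) = 0) :
    ∑ x ∈ S with N ∣ n x, a x = 0 := by
  have key : (N : ℂ) * ∑ x ∈ S with N ∣ n x, a x = ∑ k ∈ range N, cexp (↑(-d) * I * ↑(π * k / N))
      * ∑ x ∈ S, a x * cexp (↑(d - 2 * n x) * I * ↑(π * k / N)) := by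
    simp_rw [Finset.mul_sum, sum_filter]
    rw [sum_comm]
    refine sum_congr rfl fun x _ => ?_
    have hx := sum_range_cexp_two_mul_pi_div hN (-n x)
    simp only [dvd_neg, Int.natCast_dvd_natCast] at hx
    calc (if N ∣ n x then (N : ℂ) * a x else 0) = a x * (if N ∣ n x then (N : ℂ) else 0) := by
          split_ifs <;> ring
      _ = _ := by
          rw [← hx, Finset.mul_sum]
          refine sum_congr rfl fun k _ => ?_
          rw [mul_left_comm, ← exp_add]
          congr 2
          push_cast
          ring
  have hzero := key.trans (sum_eq_zero fun k hk => by rw [h k (mem_range.1 hk), mul_zero])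
  exact (mul_eq_zero.1 hzero).resolve_left (Nat.cast_ne_zero.2 hN)

end ExponentialSums

section OddMoments

open Polynomial

variable {ι : Type*}

theorem sum_mul_mul_eval_sq_eq_zero {R : Type*} [CommRing R] (S : Finset ι) (c w : ι → R)
    {n : ℕ} (h : ∀ i < n, ∑ x ∈ S, c x * w x ^ (2 * i + 1) = 0) (p : R[X])
    (hp : p.natDegree < n) :
    ∑ x ∈ S, c x * w x * p.eval (w x ^ 2) = 0 := by
  simp_rw [eval_eq_sum_range, Finset.mul_sum]
  rw [sum_comm]
  refine sum_eq_zero fun i hi => ?_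
  calc ∑ x ∈ S, c x * w x * (p.coeff i * (w x ^ 2) ^ i)
      = p.coeff i * ∑ x ∈ S, c x * w x ^ (2 * i + 1) := by
        rw [Finset.mul_sum]
        exact sum_congr rfl fun x _ => by ring
    _ = 0 := by rw [h i (by have := mem_range.1 hi; omega), mul_zero]

-- `(M - 2u)N` with `0 < 2u < M` are, up to sign, the nonzero frequencies `a - b` of the monomials
-- `z^a z̄^b` with `a + b = MN` and `N ∣ b`, other than those of `z^{MN}` and `z̄^{MN}`.
noncomputable def intermediateFreqPoly (M N : ℕ) : ℂ[X] :=
  ∏ u ∈ Icc 1 ((M - 1) / 2), (X - C ((((M : ℂ) - 2 * u) * N) ^ 2))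

theorem natDegree_intermediateFreqPoly (M N : ℕ) :
    (intermediateFreqPoly M N).natDegree = (M - 1) / 2 := by
  rw [intermediateFreqPoly, natDegree_prod_of_monic _ _ fun u _ => monic_X_sub_C _]
  simp only [natDegree_X_sub_C, sum_const, Nat.card_Icc, smul_eq_mul, mul_one]
  omega

theorem eval_intermediateFreqPoly_eq_zero {M N u : ℕ} (hu : u ∈ Icc 1 ((M - 1) / 2)) :
    (intermediateFreqPoly M N).eval ((((M : ℂ) - 2 * u) * N) ^ 2) = 0 := by
  rw [intermediateFreqPoly, eval_prod]
  exact prod_eq_zero hu (by simp)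

theorem mul_eval_intermediateFreqPoly_eq_zero {M u : ℕ} (N : ℕ) (hu : 1 ≤ u) (huM : u < M) :
    ((M : ℂ) - 2 * u) * N * (intermediateFreqPoly M N).eval ((((M : ℂ) - 2 * u) * N) ^ 2) = 0 := by
  rcases lt_trichotomy (2 * u) M with h | h | h
  · rw [eval_intermediateFreqPoly_eq_zero (mem_Icc.2 ⟨hu, by omega⟩), mul_zero]
  · have h0 : (M : ℂ) - 2 * u = 0 := by rw [← h]; push_cast; ring
    rw [h0, zero_mul, zero_mul]
  · have hMu : ((M - u : ℕ) : ℂ) = M - u := Nat.cast_sub huM.le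
    have hsq : (((M : ℂ) - 2 * u) * N) ^ 2 = (((M : ℂ) - 2 * (M - u : ℕ)) * N) ^ 2 := by
      rw [hMu]; ring
    rw [hsq, eval_intermediateFreqPoly_eq_zero (mem_Icc.2 ⟨by omega, by omega⟩), mul_zero]

theorem eval_intermediateFreqPoly_ne_zero {M N : ℕ} (hN : N ≠ 0) :
    (intermediateFreqPoly M N).eval (((M : ℂ) * N) ^ 2) ≠ 0 := by
  rw [intermediateFreqPoly, eval_prod, prod_ne_zero_iff]
  intro u hu
  obtain ⟨hu1, hu2⟩ := mem_Icc.1 hu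
  have hMu : ((M - u : ℕ) : ℂ) = M - u := Nat.cast_sub (by omega)
  have h : ((M : ℂ) * N) ^ 2 - (((M : ℂ) - 2 * u) * N) ^ 2 = 4 * N ^ 2 * u * (M - u : ℕ) := by
    rw [hMu]; ring
  simp only [eval_sub, eval_X, eval_C, h]
  refine mul_ne_zero (mul_ne_zero (mul_ne_zero (by norm_num) (pow_ne_zero _ ?_)) ?_) ?_ <;>
    exact Nat.cast_ne_zero.2 (by omega)

end OddMoments

section Quasiinvariant

def conjPair (z : ℂ) : Fin 2 → ℂ := fun i => if i = 0 then z else conj z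

def freq (v : Fin 2 →₀ ℕ) : ℤ := v 0 - v 1

theorem eval_conjPair_cexp (Q : MvPolynomial (Fin 2) ℂ) (φ : ℝ) :
    MvPolynomial.eval (conjPair (cexp (φ * I))) Q
      = ∑ v ∈ Q.support, Q.coeff v * cexp (freq v * I * φ) := by
  rw [MvPolynomial.eval_eq']
  refine sum_congr rfl fun v _ => ?_
  rw [Fin.prod_univ_two]
  simp only [conjPair, one_ne_zero, if_true, if_false, ← exp_conj, map_mul, conj_ofReal, conj_I,
    mul_neg]
  rw [← exp_nat_mul, ← exp_nat_mul, ← exp_add, freq]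
  push_cast
  ring_nf

theorem freq_mul_eval_intermediateFreqPoly_eq_zero {M N : ℕ} {v : Fin 2 →₀ ℕ}
    (hv : v 0 + v 1 = M * N) (hdvd : N ∣ v 1) (hv0 : v 0 ≠ 0) (hv1 : v 1 ≠ 0) :
    (freq v : ℂ) * (intermediateFreqPoly M N).eval ((freq v : ℂ) ^ 2) = 0 := by
  obtain ⟨u, hu⟩ := hdvd
  have hu0 : 1 ≤ u := Nat.pos_of_ne_zero fun h => hv1 (by rw [hu, h, mul_zero])
  have huM : u < M := by
    by_contra! h
    nlinarith [Nat.mul_le_mul_left N h, Nat.pos_of_ne_zero hv0]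
  have hfreq : (freq v : ℂ) = ((M : ℂ) - 2 * u) * N := by
    have : (v 0 : ℤ) = M * N - N * u := by omega
    simp only [freq]
    push_cast [this, hu]
    ring
  rw [hfreq]
  exact mul_eval_intermediateFreqPoly_eq_zero N hu0 huM

theorem MvPolynomial.IsHomogeneous.apply_zero_add_apply_one {R : Type*} [CommSemiring R]
    {Q : MvPolynomial (Fin 2) R} {d : ℕ}
    (hQ : Q.IsHomogeneous d) {v : Fin 2 →₀ ℕ} (hv : v ∈ Q.support) : v 0 + v 1 = d := by
  simpa [Finsupp.weight_apply, Finsupp.sum_fintype, Fin.sum_univ_two] using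
    hQ (MvPolynomial.mem_support_iff.1 hv)

/-- `Q` is read as a polynomial in `z` and `z̄` (variables `0` and `1`); the mirrors of `I₂(N)` are
the lines `φ = πk/N`. -/
def IsQuasiinvariant (N m : ℕ) (Q : MvPolynomial (Fin 2) ℂ) : Prop :=
  ∀ (r : ℝ) (k : ℕ), k < N → ∀ s : ℕ, 1 ≤ s → s ≤ m →
    iteratedDeriv (2 * s - 1)
      (fun φ : ℝ => MvPolynomial.eval (conjPair (r * cexp (φ * I))) Q) (π * k / N) = 0

theorem IsQuasiinvariant.sum_coeff_mul_freq_pow_eq_zero {N m d : ℕ} {Q : MvPolynomial (Fin 2) ℂ}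
    (hq : IsQuasiinvariant N m Q) (hN : N ≠ 0) (hQ : Q.IsHomogeneous d) {s : ℕ} (hs1 : 1 ≤ s)
    (hs2 : s ≤ m) :
    ∑ v ∈ Q.support with N ∣ v 1, Q.coeff v * (freq v : ℂ) ^ (2 * s - 1) = 0 := by
  have hfreq : ∀ v ∈ Q.support, freq v = d - 2 * v 1 := fun v hv => by
    have := hQ.apply_zero_add_apply_one hv
    simp only [freq]; omega
  have h := sum_filter_dvd_eq_zero_of_sum_cexp_eq_zero hN Q.support
    (fun v => Q.coeff v * (freq v * I) ^ (2 * s - 1)) (fun v => v 1) d fun k hk => by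
      have hderiv := hq 1 k hk s hs1 hs2
      simp only [ofReal_one, one_mul, eval_conjPair_cexp] at hderiv
      rw [iteratedDeriv_sum_mul_cexp] at hderiv
      rw [← hderiv]
      refine sum_congr rfl fun v hv => ?_
      rw [hfreq v hv]
  simp only [mul_pow, ← mul_assoc, ← sum_mul] at h
  exact (mul_eq_zero.1 h).resolve_right (pow_ne_zero _ I_ne_zero)

theorem IsQuasiinvariant.coeff_single_zero_eq_coeff_single_one {N m M : ℕ}
    {Q : MvPolynomial (Fin 2) ℂ} (hq : IsQuasiinvariant N m Q) (hN : N ≠ 0) (hM : M ≠ 0)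
    (hMm : M ≤ 2 * m) (hQ : Q.IsHomogeneous (M * N)) :
    Q.coeff (Finsupp.single 0 (M * N)) = Q.coeff (Finsupp.single 1 (M * N)) := by
  set a : Fin 2 →₀ ℕ := Finsupp.single 0 (M * N)
  set b : Fin 2 →₀ ℕ := Finsupp.single 1 (M * N)
  set p := intermediateFreqPoly M N
  have hd : M * N ≠ 0 := Nat.mul_ne_zero hM hN
  have hsum := sum_mul_mul_eval_sq_eq_zero (n := m) (Q.support.filter fun v => N ∣ v 1) Q.coeff
    (fun v => (freq v : ℂ)) (fun i hi => by
      have := hq.sum_coeff_mul_freq_pow_eq_zero hN hQ (s := i + 1) (by omega) (by omega)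
      rwa [show 2 * (i + 1) - 1 = 2 * i + 1 by omega] at this) p
    (by rw [natDegree_intermediateFreqPoly]; omega)
  have hab : a ≠ b := fun h => absurd ((Finsupp.single_left_inj hd).1 h) (by decide)
  have hother : ∀ v ∈ Q.support.filter (fun v => N ∣ v 1), v ≠ a ∧ v ≠ b →
      Q.coeff v * freq v * p.eval ((freq v : ℂ) ^ 2) = 0 := by
    rintro v hv ⟨hva, hvb⟩
    obtain ⟨hvS, hdvd⟩ := mem_filter.1 hv
    have hv01 := hQ.apply_zero_add_apply_one hvS
    rw [mul_assoc, freq_mul_eval_intermediateFreqPoly_eq_zero hv01 hdvd ?_ ?_, mul_zero]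
    · exact fun h0 => hvb (Finsupp.ext fun i => by fin_cases i <;> simp [b] <;> omega)
    · exact fun h1 => hva (Finsupp.ext fun i => by fin_cases i <;> simp [a] <;> omega)
  have hnotMem : ∀ w, N ∣ w 1 → w ∉ Q.support.filter (fun v => N ∣ v 1) →
      Q.coeff w * freq w * p.eval ((freq w : ℂ) ^ 2) = 0 := fun w hw hwS => by
    rw [MvPolynomial.notMem_support_iff.1 fun h => hwS (mem_filter.2 ⟨h, hw⟩), zero_mul, zero_mul]
  rw [sum_eq_add a b hab hother (hnotMem a (by simp [a])) (hnotMem b (by simp [b]))] at hsum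
  have hfa : (freq a : ℂ) = M * N := by simp only [freq, a]; simp
  have hfb : (freq b : ℂ) = -(M * N) := by simp only [freq, b]; simp
  rw [hfa, hfb, neg_sq] at hsum
  have hfactor : (Q.coeff a - Q.coeff b) * ((M * N : ℂ) * p.eval (((M : ℂ) * N) ^ 2)) = 0 := by
    linear_combination hsum
  refine sub_eq_zero.1 ((mul_eq_zero.1 hfactor).resolve_right (mul_ne_zero ?_
    (eval_intermediateFreqPoly_ne_zero hN)))
  exact_mod_cast hd

end Quasiinvariant

/-- If `q = A z^d + B z̄^d + z z̄ p` is an `m`-quasiinvariant of `I₂(N)` homogeneous of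
degree `d = (m+l)N` with `1 ≤ l ≤ m`, then `A = B`. -/
theorem stmt13 (N m l : ℕ) (hN : 2 ≤ N) (hl1 : 1 ≤ l) (hl2 : l ≤ m)
    (A B : ℂ) (P : MvPolynomial (Fin 2) ℂ)
    (hP : P.IsHomogeneous ((m + l) * N - 2))
    (hq : ∀ (r : ℝ) (k : ℕ), k < N → ∀ s : ℕ, 1 ≤ s → s ≤ m →
      iteratedDeriv (2*s-1)
        (fun φ : ℝ =>
          A * ((r:ℂ) * Complex.exp ((φ:ℂ) * Complex.I)) ^ ((m + l) * N)
          + B * ((starRingEnd ℂ) ((r:ℂ) * Complex.exp ((φ:ℂ) * Complex.I))) ^ ((m + l) * N)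
          + ((r:ℂ) * Complex.exp ((φ:ℂ) * Complex.I))
              * (starRingEnd ℂ) ((r:ℂ) * Complex.exp ((φ:ℂ) * Complex.I))
              * MvPolynomial.eval
                  (fun i => if i = 0 then (r:ℂ) * Complex.exp ((φ:ℂ) * Complex.I)
                    else (starRingEnd ℂ) ((r:ℂ) * Complex.exp ((φ:ℂ) * Complex.I))) P)
        (Real.pi * k / N) = 0) :
    A = B := by
  generalize hd : (m + l) * N = d at hP hq
  have hd2 : 2 ≤ d := hd ▸ le_trans hN (Nat.le_mul_of_pos_left N (by omega))
  let Q : MvPolynomial (Fin 2) ℂ := .C A * .X 0 ^ d + .C B * .X 1 ^ d + .X 0 * .X 1 * P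
  have hQ : Q.IsHomogeneous d := by
    refine ((MvPolynomial.isHomogeneous_C_mul_X_pow _ _ _).add
      (MvPolynomial.isHomogeneous_C_mul_X_pow _ _ _)).add ?_
    convert ((MvPolynomial.isHomogeneous_X _ 0).mul (MvPolynomial.isHomogeneous_X _ 1)).mul hP
      using 1
    omega
  have hQz : ∀ z, MvPolynomial.eval (conjPair z) Q
      = A * z ^ d + B * conj z ^ d + z * conj z * MvPolynomial.eval (conjPair z) P := fun z => by
    simp [Q, conjPair]
  have hqQ : IsQuasiinvariant N m Q := fun r k hk s hs1 hs2 => by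
    simp only [hQz]
    exact hq r k hk s hs1 hs2
  have key := hqQ.coeff_single_zero_eq_coeff_single_one (by omega) (by omega) (by omega) (hd ▸ hQ)
  rw [hd] at key
  simpa [Q, MvPolynomial.coeff_X_pow, mul_assoc, MvPolynomial.coeff_X_mul',
    Finsupp.single_left_inj (by omega : d ≠ 0)] using key
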